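/- arXiv:1407.0189 — 3 statements merged into one kernel-verified Lean document; each statement's English description precedes it below -/
import Mathlib

section
/- Let n ≥ 1, let A be an IFM of order n, let λ ∈ [0,1) and let p > 0 be a real number. Then the maxgeneralized mean–mingeneralized mean powers of A converge: for all i, j, the real sequences m ↦ (A^m)μ i j and m ↦ (A^m)ν i j each converge to a limit. -/
/-!
Raising the entries to the `p`-th power turns the product into an affine recursion: if `U m`
holds the `p`-th powers of the entries of `(A^(m+1))μ`, then
`U (m+1) i j = max_t (λ * U m i t + (1 - λ) * (Aμ t j)^p)`, because `x ↦ x^(1/p)` is monotone on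
`[0, ∞)` and therefore commutes with `max` (and likewise with `min` for the `ν`-part).
A maximum or minimum over a finite index set is `1`-Lipschitz for the sup distance, so this step
is a `λ`-contraction of the complete space of real matrices. By Banach's fixed point theorem its
iterates converge, hence so do their entrywise `1/p`-th powers.
-/

open Filter Topology

/-- `A` (given by membership part `Amu` and non-membership part `Anu`) is an
intuitionistic fuzzy matrix. -/
def IsIFM (n : ℕ) (Amu Anu : Fin n → Fin n → ℝ) : Prop :=
  ∀ i j, 0 ≤ Amu i j ∧ 0 ≤ Anu i j ∧ Amu i j + Anu i j ≤ 1

/-- Powers of an IFM under the maxgeneralized mean–mingeneralized mean operation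
with parameters `lam` and exponent `p`:
`A^1 = A` and `A^(k+1) = A^k ∘ A`, where
`(X ∘ A)μ i j = max_t (lam·(Xμ i t)^p + (1-lam)·(Aμ t j)^p)^(1/p)` and
`(X ∘ A)ν i j = min_t (lam·(Xν i t)^p + (1-lam)·(Aν t j)^p)^(1/p)`.
(The value at `0` is irrelevant; it is set to `A`.) -/
noncomputable def gmPow (n : ℕ) (lam p : ℝ) (Amu Anu : Fin n → Fin n → ℝ) :
    ℕ → (Fin n → Fin n → ℝ) × (Fin n → Fin n → ℝ)
  | 0 => (Amu, Anu)
  | 1 => (Amu, Anu)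
  | m + 2 =>
    let X := gmPow n lam p Amu Anu (m + 1)
    (fun i j => ⨆ t : Fin n, (lam * X.1 i t ^ p + (1 - lam) * Amu t j ^ p) ^ (1 / p),
     fun i j => ⨅ t : Fin n, (lam * X.2 i t ^ p + (1 - lam) * Anu t j ^ p) ^ (1 / p))

section FiniteSupInf

variable {ι : Type*} [Finite ι] [Nonempty ι]

theorem dist_ciSup_ciSup_le {f g : ι → ℝ} {c : ℝ} (h : ∀ t, dist (f t) (g t) ≤ c) :
    dist (⨆ t, f t) (⨆ t, g t) ≤ c := by
  have bound {f g : ι → ℝ} (h : ∀ t, f t ≤ c + g t) : ⨆ t, f t ≤ c + ⨆ t, g t :=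
    ciSup_le fun t => (h t).trans (by linarith [le_ciSup (Set.finite_range g).bddAbove t])
  simp only [Real.dist_eq, abs_sub_le_iff, sub_le_iff_le_add] at h ⊢
  exact ⟨bound fun t => (h t).1, bound fun t => (h t).2⟩

theorem dist_ciInf_ciInf_le {f g : ι → ℝ} {c : ℝ} (h : ∀ t, dist (f t) (g t) ≤ c) :
    dist (⨅ t, f t) (⨅ t, g t) ≤ c := by
  have bound {f g : ι → ℝ} (h : ∀ t, f t ≤ c + g t) : ⨅ t, f t ≤ c + ⨅ t, g t := by
    obtain ⟨t, ht⟩ := exists_eq_ciInf_of_finite (f := g)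
    exact (ciInf_le (Set.finite_range f).bddBelow t).trans (ht ▸ h t)
  simp only [Real.dist_eq, abs_sub_le_iff, sub_le_iff_le_add] at h ⊢
  exact ⟨bound fun t => (h t).1, bound fun t => (h t).2⟩

theorem MonotoneOn.map_ciSup_of_finite {α β : Type*} [ConditionallyCompleteLinearOrder α]
    [ConditionallyCompleteLinearOrder β] {f : α → β} {s : Set α} (hf : MonotoneOn f s)
    {g : ι → α} (hg : ∀ t, g t ∈ s) : f (⨆ t, g t) = ⨆ t, f (g t) := by
  obtain ⟨t₀, ht₀⟩ := exists_eq_ciSup_of_finite (f := g)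
  rw [← ht₀]
  refine le_antisymm (le_ciSup (f := fun t => f (g t)) (Set.finite_range _).bddAbove t₀)
    (ciSup_le fun t => hf (hg t) (hg t₀) (ht₀ ▸ le_ciSup (Set.finite_range g).bddAbove t))

theorem MonotoneOn.map_ciInf_of_finite {α β : Type*} [ConditionallyCompleteLinearOrder α]
    [ConditionallyCompleteLinearOrder β] {f : α → β} {s : Set α} (hf : MonotoneOn f s)
    {g : ι → α} (hg : ∀ t, g t ∈ s) : f (⨅ t, g t) = ⨅ t, f (g t) :=
  MonotoneOn.map_ciSup_of_finite (α := αᵒᵈ) (β := βᵒᵈ) hf.dual hg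

end FiniteSupInf

section MeanStep

variable {ι : Type*}

noncomputable def supStep (lam : ℝ) (B U : ι → ι → ℝ) : ι → ι → ℝ :=
  fun i j => ⨆ t, (lam * U i t + (1 - lam) * B t j)

noncomputable def infStep (lam : ℝ) (B U : ι → ι → ℝ) : ι → ι → ℝ :=
  fun i j => ⨅ t, (lam * U i t + (1 - lam) * B t j)

variable [Fintype ι]

theorem dist_mul_add_le {lam : ℝ} (hlam : 0 ≤ lam) (U V : ι → ι → ℝ) (c : ℝ) (i t : ι) :
    dist (lam * U i t + c) (lam * V i t + c) ≤ lam * dist U V := by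
  calc dist (lam * U i t + c) (lam * V i t + c) = lam * dist (U i t) (V i t) := by
        rw [Real.dist_eq, Real.dist_eq, add_sub_add_right_eq_sub, ← mul_sub, abs_mul,
          abs_of_nonneg hlam]
    _ ≤ lam * dist U V :=
        mul_le_mul_of_nonneg_left ((dist_le_pi_dist _ _ t).trans (dist_le_pi_dist U V i)) hlam

theorem lipschitzWith_of_forall_dist_apply_le {α κ : Type*} [PseudoMetricSpace α] [Fintype κ]
    {F : α → ι → κ → ℝ} {K : NNReal} (h : ∀ U V i j, dist (F U i j) (F V i j) ≤ K * dist U V) :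
    LipschitzWith K F :=
  LipschitzWith.of_dist_le_mul fun U V =>
    (dist_pi_le_iff (by positivity)).2 fun i => (dist_pi_le_iff (by positivity)).2 (h U V i)

variable [Nonempty ι] {lam : ℝ}

theorem contractingWith_supStep (hlam : lam ∈ Set.Ico 0 1) (B : ι → ι → ℝ) :
    ContractingWith ⟨lam, hlam.1⟩ (supStep lam B) :=
  ⟨hlam.2, lipschitzWith_of_forall_dist_apply_le fun U V _ _ =>
    dist_ciSup_ciSup_le fun _ => dist_mul_add_le hlam.1 U V _ _ _⟩

theorem contractingWith_infStep (hlam : lam ∈ Set.Ico 0 1) (B : ι → ι → ℝ) :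
    ContractingWith ⟨lam, hlam.1⟩ (infStep lam B) :=
  ⟨hlam.2, lipschitzWith_of_forall_dist_apply_le fun U V _ _ =>
    dist_ciInf_ciInf_le fun _ => dist_mul_add_le hlam.1 U V _ _ _⟩

end MeanStep

section Nonneg

variable {ι : Type*} {lam : ℝ} {B : ι → ι → ℝ}

theorem mul_add_one_sub_mul_nonneg {a b : ℝ} (hlam : lam ∈ Set.Icc 0 1) (ha : 0 ≤ a)
    (hb : 0 ≤ b) : 0 ≤ lam * a + (1 - lam) * b :=
  add_nonneg (mul_nonneg hlam.1 ha) (mul_nonneg (sub_nonneg.2 hlam.2) hb)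

theorem mapsTo_supStep_nonneg (hlam : lam ∈ Set.Icc 0 1) (hB : 0 ≤ B) :
    Set.MapsTo (supStep lam B) (Set.Ici 0) (Set.Ici 0) := fun U (hU : 0 ≤ U) i j =>
  Real.iSup_nonneg fun t => mul_add_one_sub_mul_nonneg hlam (hU i t) (hB t j)

theorem mapsTo_infStep_nonneg (hlam : lam ∈ Set.Icc 0 1) (hB : 0 ≤ B) :
    Set.MapsTo (infStep lam B) (Set.Ici 0) (Set.Ici 0) := fun U (hU : 0 ≤ U) i j =>
  Real.iInf_nonneg fun t => mul_add_one_sub_mul_nonneg hlam (hU i t) (hB t j)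

end Nonneg

section GmPow

variable {n : ℕ} [Nonempty (Fin n)] {lam p : ℝ} {Amu Anu : Fin n → Fin n → ℝ}

theorem gmPow_fst_succ (hlam : lam ∈ Set.Icc 0 1) (hp : 0 < p) (hAmu : 0 ≤ Amu) (m : ℕ) :
    (gmPow n lam p Amu Anu (m + 1)).1 = fun i j =>
      ((supStep lam fun i j => Amu i j ^ p)^[m] fun i j => Amu i j ^ p) i j ^ (1 / p) := by
  set B : Fin n → Fin n → ℝ := fun i j => Amu i j ^ p
  have hB : 0 ≤ B := fun i j => Real.rpow_nonneg (hAmu i j) p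
  induction m with
  | zero =>
    funext i j
    rw [one_div]
    exact (Real.rpow_rpow_inv (hAmu i j) hp.ne').symm
  | succ m ih =>
    set W := (supStep lam B)^[m] B
    have hW : 0 ≤ W := (mapsTo_supStep_nonneg hlam hB).iterate m hB
    funext i j
    rw [Function.iterate_succ_apply']
    show (⨆ t, (lam * (gmPow n lam p Amu Anu (m + 1)).1 i t ^ p + (1 - lam) * B t j) ^ (1 / p))
      = (⨆ t, (lam * W i t + (1 - lam) * B t j)) ^ (1 / p)
    simp only [ih, one_div, Real.rpow_inv_rpow (hW _ _) hp.ne']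
    exact ((Real.monotoneOn_rpow_Ici_of_exponent_nonneg (by positivity)).map_ciSup_of_finite
      fun t => mul_add_one_sub_mul_nonneg hlam (hW i t) (hB t j)).symm

theorem gmPow_snd_succ (hlam : lam ∈ Set.Icc 0 1) (hp : 0 < p) (hAnu : 0 ≤ Anu) (m : ℕ) :
    (gmPow n lam p Amu Anu (m + 1)).2 = fun i j =>
      ((infStep lam fun i j => Anu i j ^ p)^[m] fun i j => Anu i j ^ p) i j ^ (1 / p) := by
  set B : Fin n → Fin n → ℝ := fun i j => Anu i j ^ p
  have hB : 0 ≤ B := fun i j => Real.rpow_nonneg (hAnu i j) p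
  induction m with
  | zero =>
    funext i j
    rw [one_div]
    exact (Real.rpow_rpow_inv (hAnu i j) hp.ne').symm
  | succ m ih =>
    set W := (infStep lam B)^[m] B
    have hW : 0 ≤ W := (mapsTo_infStep_nonneg hlam hB).iterate m hB
    funext i j
    rw [Function.iterate_succ_apply']
    show (⨅ t, (lam * (gmPow n lam p Amu Anu (m + 1)).2 i t ^ p + (1 - lam) * B t j) ^ (1 / p))
      = (⨅ t, (lam * W i t + (1 - lam) * B t j)) ^ (1 / p)
    simp only [ih, one_div, Real.rpow_inv_rpow (hW _ _) hp.ne']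
    exact ((Real.monotoneOn_rpow_Ici_of_exponent_nonneg (by positivity)).map_ciInf_of_finite
      fun t => mul_add_one_sub_mul_nonneg hlam (hW i t) (hB t j)).symm

end GmPow

theorem gmPow_converges_general (n : ℕ) (Amu Anu : Fin n → Fin n → ℝ)
    (hA : IsIFM n Amu Anu) (lam p : ℝ) (hlam : lam ∈ Set.Ico (0 : ℝ) 1) (hp : 0 < p)
    (i j : Fin n) :
    (∃ L : ℝ, Tendsto (fun m => (gmPow n lam p Amu Anu m).1 i j) atTop (𝓝 L)) ∧
      ∃ M : ℝ, Tendsto (fun m => (gmPow n lam p Amu Anu m).2 i j) atTop (𝓝 M) := by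
  have : Nonempty (Fin n) := ⟨i⟩
  have hlam_Icc : lam ∈ Set.Icc 0 1 := Set.Ico_subset_Icc_self hlam
  have converges_of_succ_eq {f : ℕ → ℝ} {U : ℕ → Fin n → Fin n → ℝ} {L : Fin n → Fin n → ℝ}
      (hf : ∀ m, f (m + 1) = U m i j ^ (1 / p)) (hU : Tendsto U atTop (𝓝 L)) :
      ∃ M, Tendsto f atTop (𝓝 M) :=
    ⟨_, (tendsto_add_atTop_iff_nat 1).1 <|
      ((((continuous_apply_apply i j).tendsto L).comp hU).rpow_const
        (Or.inr (by positivity))).congr fun m => (hf m).symm⟩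
  exact ⟨converges_of_succ_eq
      (fun m => congrFun₂ (gmPow_fst_succ hlam_Icc hp (hA · · |>.1) m) i j)
      ((contractingWith_supStep hlam _).tendsto_iterate_fixedPoint _),
    converges_of_succ_eq
      (fun m => congrFun₂ (gmPow_snd_succ hlam_Icc hp (hA · · |>.2.1) m) i j)
      ((contractingWith_infStep hlam _).tendsto_iterate_fixedPoint _)⟩

/-- Theorem 3.2 (first part): the maxgeneralized mean–mingeneralized mean
powers of an IFM converge entrywise. -/
theorem gmPow_converges (n : ℕ) (hn : 1 ≤ n) (Amu Anu : Fin n → Fin n → ℝ)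
    (hA : IsIFM n Amu Anu) (lam p : ℝ) (hlam : lam ∈ Set.Ico (0 : ℝ) 1) (hp : 0 < p)
    (i j : Fin n) :
    (∃ L : ℝ, Tendsto (fun m => (gmPow n lam p Amu Anu m).1 i j) atTop (𝓝 L)) ∧
      ∃ M : ℝ, Tendsto (fun m => (gmPow n lam p Amu Anu m).2 i j) atTop (𝓝 M) :=
  gmPow_converges_general n Amu Anu hA lam p hlam hp i j
end

section
/- Let n ≥ 1, let A be an IFM of order n, let λ ∈ (0,1) and let p > 0 be a real number. Then (A^m)μ i j → 1 and (A^m)ν i j → 0 as m → ∞ for all i, j (powers taken with the maxgeneralized mean–mingeneralized mean operation; i.e., the powers converge to the universal IFM U, all of whose entries are ⟨1,0⟩) if and only if every column of A contains the entry ⟨1,0⟩, i.e., for every j there exists i with Aμ i j = 1 and Aν i j = 0. -/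
open Filter Topology

/-!
If column `j` of `A` contains `⟨1,0⟩` in row `k`, choosing `t = k` in the max/min defining
`A^(m+1)` gives `1 - (A^(m+1))μ i j ^ p ≤ λ (1 - (A^m)μ i k ^ p)` and
`(A^(m+1))ν i j ^ p ≤ λ (A^m)ν i k ^ p`, so both defects decay like `λ^m`.
Conversely, if column `j` has no entry `⟨1,0⟩` then, `A` being an IFM, `c := max_k Aμ k j < 1`,
and every `(A^(m+1))μ i j` is at most the mean of `1` and `c`, which is `< 1`.
-/

open Set

noncomputable def genMean (lam p x y : ℝ) : ℝ :=
  (lam * x ^ p + (1 - lam) * y ^ p) ^ (1 / p)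

section GenMean

variable {lam p x y x' y' : ℝ}

lemma genMean_base_nonneg (hlam : lam ∈ Icc 0 1) (hx : 0 ≤ x) (hy : 0 ≤ y) :
    0 ≤ lam * x ^ p + (1 - lam) * y ^ p :=
  add_nonneg (mul_nonneg hlam.1 (Real.rpow_nonneg hx p))
    (mul_nonneg (sub_nonneg.2 hlam.2) (Real.rpow_nonneg hy p))

lemma genMean_nonneg (hlam : lam ∈ Icc 0 1) (hx : 0 ≤ x) (hy : 0 ≤ y) :
    0 ≤ genMean lam p x y :=
  Real.rpow_nonneg (genMean_base_nonneg hlam hx hy) _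

lemma genMean_rpow (hlam : lam ∈ Icc 0 1) (hp : p ≠ 0) (hx : 0 ≤ x) (hy : 0 ≤ y) :
    genMean lam p x y ^ p = lam * x ^ p + (1 - lam) * y ^ p := by
  rw [genMean, ← Real.rpow_mul (genMean_base_nonneg hlam hx hy), one_div_mul_cancel hp,
    Real.rpow_one]

lemma genMean_one_one (lam p : ℝ) : genMean lam p 1 1 = 1 := by
  simp [genMean]

lemma genMean_le_genMean (hlam : lam ∈ Icc 0 1) (hp : 0 ≤ p) (hx : 0 ≤ x) (hxx' : x ≤ x')
    (hy : 0 ≤ y) (hyy' : y ≤ y') : genMean lam p x y ≤ genMean lam p x' y' := by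
  have hlam₀ : 0 ≤ lam := hlam.1
  have hlam₁ : 0 ≤ 1 - lam := sub_nonneg.2 hlam.2
  refine Real.rpow_le_rpow (genMean_base_nonneg hlam hx hy) ?_ (by positivity)
  gcongr

lemma genMean_mem_Icc (hlam : lam ∈ Icc 0 1) (hp : 0 ≤ p) (hx : x ∈ Icc 0 1)
    (hy : y ∈ Icc 0 1) : genMean lam p x y ∈ Icc 0 1 :=
  ⟨genMean_nonneg hlam hx.1 hy.1,
    (genMean_le_genMean hlam hp hx.1 hx.2 hy.1 hy.2).trans_eq (genMean_one_one lam p)⟩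

lemma genMean_one_lt_one (hlam : lam ∈ Ico 0 1) (hp : 0 < p) (hy : 0 ≤ y) (hy1 : y < 1) :
    genMean lam p 1 y < 1 := by
  have hyp : y ^ p < 1 := Real.rpow_lt_one hy hy1 hp
  refine Real.rpow_lt_one (genMean_base_nonneg (Ico_subset_Icc_self hlam) zero_le_one hy) ?_
    (by positivity)
  rw [Real.one_rpow]
  nlinarith [hlam.2]

end GenMean

lemma IsIFM.mu_mem_Icc {n : ℕ} {Amu Anu : Fin n → Fin n → ℝ} (hA : IsIFM n Amu Anu)
    (i j : Fin n) : Amu i j ∈ Icc 0 1 :=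
  ⟨(hA i j).1, by linarith [hA i j]⟩

lemma IsIFM.nu_mem_Icc {n : ℕ} {Amu Anu : Fin n → Fin n → ℝ} (hA : IsIFM n Amu Anu)
    (i j : Fin n) : Anu i j ∈ Icc 0 1 :=
  ⟨(hA i j).2.1, by linarith [hA i j]⟩

lemma IsIFM.nu_eq_zero_of_mu_eq_one {n : ℕ} {Amu Anu : Fin n → Fin n → ℝ}
    (hA : IsIFM n Amu Anu) {i j : Fin n} (h : Amu i j = 1) : Anu i j = 0 :=
  le_antisymm (by linarith [hA i j]) (hA i j).2.1

namespace gmPow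

variable {n : ℕ} {lam p : ℝ} {Amu Anu : Fin n → Fin n → ℝ}

lemma fst_add_two (m : ℕ) (i j : Fin n) :
    (gmPow n lam p Amu Anu (m + 2)).1 i j =
      ⨆ t, genMean lam p ((gmPow n lam p Amu Anu (m + 1)).1 i t) (Amu t j) :=
  rfl

lemma snd_add_two (m : ℕ) (i j : Fin n) :
    (gmPow n lam p Amu Anu (m + 2)).2 i j =
      ⨅ t, genMean lam p ((gmPow n lam p Amu Anu (m + 1)).2 i t) (Anu t j) :=
  rfl

lemma fst_mem_Icc (hlam : lam ∈ Icc 0 1) (hp : 0 ≤ p) (hA : ∀ i j, Amu i j ∈ Icc 0 1) :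
    ∀ m i j, (gmPow n lam p Amu Anu m).1 i j ∈ Icc 0 1
  | 0, i, j | 1, i, j => hA i j
  | m + 2, i, j => by
    have : Nonempty (Fin n) := ⟨i⟩
    obtain ⟨t, ht⟩ := exists_eq_ciSup_of_finite
      (f := fun t => genMean lam p ((gmPow n lam p Amu Anu (m + 1)).1 i t) (Amu t j))
    rw [fst_add_two, ← ht]
    exact genMean_mem_Icc hlam hp (fst_mem_Icc hlam hp hA (m + 1) i t) (hA t j)

lemma snd_mem_Icc (hlam : lam ∈ Icc 0 1) (hp : 0 ≤ p) (hA : ∀ i j, Anu i j ∈ Icc 0 1) :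
    ∀ m i j, (gmPow n lam p Amu Anu m).2 i j ∈ Icc 0 1
  | 0, i, j | 1, i, j => hA i j
  | m + 2, i, j => by
    have : Nonempty (Fin n) := ⟨i⟩
    obtain ⟨t, ht⟩ := exists_eq_ciInf_of_finite
      (f := fun t => genMean lam p ((gmPow n lam p Amu Anu (m + 1)).2 i t) (Anu t j))
    rw [snd_add_two, ← ht]
    exact genMean_mem_Icc hlam hp (snd_mem_Icc hlam hp hA (m + 1) i t) (hA t j)

lemma exists_eq_one_of_tendsto_fst (hlam : lam ∈ Ico 0 1) (hp : 0 < p)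
    (hA : ∀ i j, Amu i j ∈ Icc 0 1) {i j : Fin n}
    (h : Tendsto (fun m => (gmPow n lam p Amu Anu m).1 i j) atTop (𝓝 1)) :
    ∃ k, Amu k j = 1 := by
  by_contra! hcol
  have : Nonempty (Fin n) := ⟨i⟩
  obtain ⟨k, hk⟩ := Finite.exists_max (Amu · j)
  have hlam' := Ico_subset_Icc_self hlam
  have hbound : ∀ m, (gmPow n lam p Amu Anu (m + 2)).1 i j ≤ genMean lam p 1 (Amu k j) :=
    fun m => ciSup_le fun t => genMean_le_genMean hlam' hp.le
      (fst_mem_Icc hlam' hp.le hA (m + 1) i t).1 (fst_mem_Icc hlam' hp.le hA (m + 1) i t).2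
      (hA t j).1 (hk t)
  have hlt := genMean_one_lt_one hlam hp (hA k j).1 ((hA k j).2.lt_of_ne (hcol k))
  exact hlt.not_ge (le_of_tendsto' ((tendsto_add_atTop_iff_nat 2).2 h) hbound)

lemma one_sub_pow_le_fst_rpow (hlam : lam ∈ Icc 0 1) (hp : 0 < p)
    (hA : ∀ i j, Amu i j ∈ Icc 0 1) (hcol : ∀ j, ∃ k, Amu k j = 1) :
    ∀ m i j, 1 - lam ^ m ≤ (gmPow n lam p Amu Anu (m + 1)).1 i j ^ p
  | 0, i, j => by
    simpa using Real.rpow_nonneg (fst_mem_Icc hlam hp.le hA 1 i j).1 p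
  | m + 1, i, j => by
    obtain ⟨k, hk⟩ := hcol j
    set X := gmPow n lam p Amu Anu (m + 1)
    have hX : X.1 i k ∈ Icc 0 1 := fst_mem_Icc hlam hp.le hA (m + 1) i k
    calc 1 - lam ^ (m + 1) = lam * (1 - lam ^ m) + (1 - lam) * 1 := by ring
      _ ≤ lam * X.1 i k ^ p + (1 - lam) * Amu k j ^ p := by
        rw [hk, Real.one_rpow]
        gcongr
        · exact hlam.1
        · exact one_sub_pow_le_fst_rpow hlam hp hA hcol m i k
      _ = genMean lam p (X.1 i k) (Amu k j) ^ p := (genMean_rpow hlam hp.ne' hX.1 (hA k j).1).symm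
      _ ≤ (gmPow n lam p Amu Anu (m + 2)).1 i j ^ p :=
        Real.rpow_le_rpow (genMean_nonneg hlam hX.1 (hA k j).1)
          (le_ciSup (f := fun t => genMean lam p (X.1 i t) (Amu t j))
            (Finite.bddAbove (finite_range _)) k) hp.le

lemma snd_rpow_le_pow (hlam : lam ∈ Icc 0 1) (hp : 0 < p)
    (hA : ∀ i j, Anu i j ∈ Icc 0 1) (hcol : ∀ j, ∃ k, Anu k j = 0) :
    ∀ m i j, (gmPow n lam p Amu Anu (m + 1)).2 i j ^ p ≤ lam ^ m
  | 0, i, j => by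
    simpa using Real.rpow_le_one (snd_mem_Icc hlam hp.le hA 1 i j).1
      (snd_mem_Icc hlam hp.le hA 1 i j).2 hp.le
  | m + 1, i, j => by
    obtain ⟨k, hk⟩ := hcol j
    set X := gmPow n lam p Amu Anu (m + 1)
    have hX : X.2 i k ∈ Icc 0 1 := snd_mem_Icc hlam hp.le hA (m + 1) i k
    calc (gmPow n lam p Amu Anu (m + 2)).2 i j ^ p
        ≤ genMean lam p (X.2 i k) (Anu k j) ^ p :=
          Real.rpow_le_rpow (snd_mem_Icc hlam hp.le hA (m + 2) i j).1
            (ciInf_le (Finite.bddBelow (finite_range _)) k) hp.le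
      _ = lam * X.2 i k ^ p := by
        rw [genMean_rpow hlam hp.ne' hX.1 (hA k j).1, hk, Real.zero_rpow hp.ne', mul_zero,
          add_zero]
      _ ≤ lam * lam ^ m := by
        gcongr
        · exact hlam.1
        · exact snd_rpow_le_pow hlam hp hA hcol m i k
      _ = lam ^ (m + 1) := (pow_succ' lam m).symm

lemma tendsto_fst_one (hlam : lam ∈ Ico 0 1) (hp : 0 < p)
    (hA : ∀ i j, Amu i j ∈ Icc 0 1) (hcol : ∀ j, ∃ k, Amu k j = 1) (i j : Fin n) :
    Tendsto (fun m => (gmPow n lam p Amu Anu m).1 i j) atTop (𝓝 1) := by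
  have hlam' := Ico_subset_Icc_self hlam
  rw [← tendsto_add_atTop_iff_nat 1]
  have hlower : Tendsto (fun m : ℕ => (1 - lam ^ m) ^ (1 / p)) atTop (𝓝 1) := by
    simpa using ((tendsto_pow_atTop_nhds_zero_of_lt_one hlam.1 hlam.2).const_sub 1).rpow_const
      (p := 1 / p) (Or.inl (by norm_num))
  refine tendsto_of_tendsto_of_tendsto_of_le_of_le hlower tendsto_const_nhds (fun m => ?_)
    (fun m => (fst_mem_Icc hlam' hp.le hA (m + 1) i j).2)
  rw [one_div, Real.rpow_inv_le_iff_of_pos (sub_nonneg.2 (pow_le_one₀ hlam.1 hlam.2.le))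
    (fst_mem_Icc hlam' hp.le hA (m + 1) i j).1 hp]
  exact one_sub_pow_le_fst_rpow hlam' hp hA hcol m i j

lemma tendsto_snd_zero (hlam : lam ∈ Ico 0 1) (hp : 0 < p)
    (hA : ∀ i j, Anu i j ∈ Icc 0 1) (hcol : ∀ j, ∃ k, Anu k j = 0) (i j : Fin n) :
    Tendsto (fun m => (gmPow n lam p Amu Anu m).2 i j) atTop (𝓝 0) := by
  have hlam' := Ico_subset_Icc_self hlam
  rw [← tendsto_add_atTop_iff_nat 1]
  have hupper : Tendsto (fun m : ℕ => (lam ^ m) ^ (1 / p)) atTop (𝓝 0) := by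
    simpa [Real.zero_rpow (inv_ne_zero hp.ne')] using
      (tendsto_pow_atTop_nhds_zero_of_lt_one hlam.1 hlam.2).rpow_const
        (p := 1 / p) (Or.inr (by positivity))
  refine tendsto_of_tendsto_of_tendsto_of_le_of_le tendsto_const_nhds hupper
    (fun m => (snd_mem_Icc hlam' hp.le hA (m + 1) i j).1) (fun m => ?_)
  rw [one_div, Real.le_rpow_inv_iff_of_pos (snd_mem_Icc hlam' hp.le hA (m + 1) i j).1
    (pow_nonneg hlam.1 m) hp]
  exact snd_rpow_le_pow hlam' hp hA hcol m i j

end gmPow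

theorem gmPow_tendsto_universal_iff_general (n : ℕ)
    (Amu Anu : Fin n → Fin n → ℝ) (hA : IsIFM n Amu Anu)
    (lam p : ℝ) (hlam : lam ∈ Set.Ioo (0 : ℝ) 1) (hp : 0 < p) :
    (∀ i j : Fin n,
        Tendsto (fun m => (gmPow n lam p Amu Anu m).1 i j) atTop (𝓝 1) ∧
        Tendsto (fun m => (gmPow n lam p Amu Anu m).2 i j) atTop (𝓝 0)) ↔
      ∀ j : Fin n, ∃ i : Fin n, Amu i j = 1 ∧ Anu i j = 0 := by
  have hlam' : lam ∈ Ico 0 1 := Ioo_subset_Ico_self hlam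
  constructor
  · intro h j
    obtain ⟨k, hk⟩ := gmPow.exists_eq_one_of_tendsto_fst hlam' hp hA.mu_mem_Icc (h j j).1
    exact ⟨k, hk, hA.nu_eq_zero_of_mu_eq_one hk⟩
  · intro h i j
    choose k hmu hnu using h
    exact ⟨gmPow.tendsto_fst_one hlam' hp hA.mu_mem_Icc (fun j => ⟨k j, hmu j⟩) i j,
      gmPow.tendsto_snd_zero hlam' hp hA.nu_mem_Icc (fun j => ⟨k j, hnu j⟩) i j⟩

/-- Theorem 3.4: the maxgeneralized mean–mingeneralized mean powers of `A`
converge to the universal IFM `U` (all entries `⟨1,0⟩`) if and only if every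
column of `A` contains the entry `⟨1,0⟩`. -/
theorem gmPow_tendsto_universal_iff (n : ℕ) (hn : 1 ≤ n)
    (Amu Anu : Fin n → Fin n → ℝ) (hA : IsIFM n Amu Anu)
    (lam p : ℝ) (hlam : lam ∈ Set.Ioo (0 : ℝ) 1) (hp : 0 < p) :
    (∀ i j : Fin n,
        Tendsto (fun m => (gmPow n lam p Amu Anu m).1 i j) atTop (𝓝 1) ∧
        Tendsto (fun m => (gmPow n lam p Amu Anu m).2 i j) atTop (𝓝 0)) ↔
      ∀ j : Fin n, ∃ i : Fin n, Amu i j = 1 ∧ Anu i j = 0 :=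
  gmPow_tendsto_universal_iff_general n Amu Anu hA lam p hlam hp
end

section
/- Let n ≥ 1, let A be an IFM of order n, let λ ∈ [0,1], and let p, q be real numbers with 0 < p ≤ q. Write A^m_p for the m-th power of A under the maxgeneralized mean–mingeneralized mean operation with exponent p, and A^m_q for the one with exponent q. Then for every m ≥ 1 and all i, j, the membership entries satisfy (A^m_p)μ i j ≤ (A^m_q)μ i j (this is the membership part of the dominance A^m_p ≤ A^m_q of Theorem 3.6). -/
open Filter Topology

/-!
Each membership entry of `A^(m+1)` is a maximum of two-term weighted power means of entries of
`A^m` and `A`. A weighted power mean is monotone in its arguments and, by Jensen's inequality for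
`x ↦ x ^ (q / p)`, nondecreasing in the exponent; induction on `m` gives the claim.
-/

namespace Real

theorem rpow_mean_le_rpow_mean {ι : Type*} (s : Finset ι) (w z : ι → ℝ)
    (hw : ∀ i ∈ s, 0 ≤ w i) (hw' : ∑ i ∈ s, w i = 1) (hz : ∀ i ∈ s, 0 ≤ z i)
    {p q : ℝ} (hp : 0 < p) (hpq : p ≤ q) :
    (∑ i ∈ s, w i * z i ^ p) ^ (1 / p) ≤ (∑ i ∈ s, w i * z i ^ q) ^ (1 / q) := by
  have hq : 0 < q := hp.trans_le hpq
  have hsum : 0 ≤ ∑ i ∈ s, w i * z i ^ p :=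
    Finset.sum_nonneg fun i hi => mul_nonneg (hw i hi) (rpow_nonneg (hz i hi) p)
  -- Jensen for the convex map `x ↦ x ^ (q / p)`, applied to the values `z i ^ p`.
  have jensen : (∑ i ∈ s, w i * z i ^ p) ^ (q / p) ≤ ∑ i ∈ s, w i * z i ^ q := by
    refine (rpow_arith_mean_le_arith_mean_rpow s w (fun i => z i ^ p) hw hw'
      (fun i hi => rpow_nonneg (hz i hi) p) ((one_le_div hp).mpr hpq)).trans_eq ?_
    refine Finset.sum_congr rfl fun i hi => ?_
    rw [← rpow_mul (hz i hi), mul_div_cancel₀ q hp.ne']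
  calc (∑ i ∈ s, w i * z i ^ p) ^ (1 / p)
      = ((∑ i ∈ s, w i * z i ^ p) ^ (q / p)) ^ (1 / q) := by
        rw [← rpow_mul hsum]
        field_simp
    _ ≤ (∑ i ∈ s, w i * z i ^ q) ^ (1 / q) :=
        rpow_le_rpow (rpow_nonneg hsum _) jensen (by positivity)

theorem rpow_mean2_le_rpow_mean2 {lam x y p q : ℝ} (hlam : lam ∈ Set.Icc (0 : ℝ) 1)
    (hx : 0 ≤ x) (hy : 0 ≤ y) (hp : 0 < p) (hpq : p ≤ q) :
    (lam * x ^ p + (1 - lam) * y ^ p) ^ (1 / p) ≤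
      (lam * x ^ q + (1 - lam) * y ^ q) ^ (1 / q) := by
  have h := rpow_mean_le_rpow_mean Finset.univ ![lam, 1 - lam] ![x, y]
    (by simp [Fin.forall_fin_two, hlam.1, hlam.2]) (by simp)
    (by simp [Fin.forall_fin_two, hx, hy]) hp hpq
  simpa [Fin.sum_univ_two] using h

theorem rpow_mean2_mono_left {lam x x' y p : ℝ} (hlam : lam ∈ Set.Icc (0 : ℝ) 1)
    (hx : 0 ≤ x) (hxx' : x ≤ x') (hy : 0 ≤ y) (hp : 0 ≤ p) :
    (lam * x ^ p + (1 - lam) * y ^ p) ^ (1 / p) ≤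
      (lam * x' ^ p + (1 - lam) * y ^ p) ^ (1 / p) := by
  have h1lam : 0 ≤ 1 - lam := sub_nonneg.mpr hlam.2
  have h0lam : 0 ≤ lam := hlam.1
  gcongr

end Real

section gmPow

variable {n : ℕ} {lam p q : ℝ} {Amu Anu : Fin n → Fin n → ℝ}

theorem gmPow_fst_add_two (m : ℕ) (i j : Fin n) :
    (gmPow n lam p Amu Anu (m + 2)).1 i j =
      ⨆ t, (lam * (gmPow n lam p Amu Anu (m + 1)).1 i t ^ p + (1 - lam) * Amu t j ^ p) ^ (1 / p) :=
  rfl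

theorem gmPow_fst_nonneg (hAmu : ∀ i j, 0 ≤ Amu i j) (hlam : lam ∈ Set.Icc (0 : ℝ) 1) :
    ∀ m i j, 0 ≤ (gmPow n lam p Amu Anu m).1 i j
  | 0, i, j | 1, i, j => hAmu i j
  | m + 2, i, j => by
    rw [gmPow_fst_add_two]
    refine Real.iSup_nonneg fun t => Real.rpow_nonneg (add_nonneg ?_ ?_) _
    · exact mul_nonneg hlam.1 (Real.rpow_nonneg (gmPow_fst_nonneg hAmu hlam (m + 1) i t) p)
    · exact mul_nonneg (sub_nonneg.mpr hlam.2) (Real.rpow_nonneg (hAmu t j) p)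

theorem gmPow_fst_mono_exponent (hAmu : ∀ i j, 0 ≤ Amu i j) (hlam : lam ∈ Set.Icc (0 : ℝ) 1)
    (hp : 0 < p) (hpq : p ≤ q) :
    ∀ m i j, (gmPow n lam p Amu Anu m).1 i j ≤ (gmPow n lam q Amu Anu m).1 i j
  | 0, _, _ | 1, _, _ => le_rfl
  | m + 2, i, j => by
    rw [gmPow_fst_add_two, gmPow_fst_add_two]
    refine ciSup_mono (Set.finite_range _).bddAbove fun t => ?_
    have hX := gmPow_fst_nonneg (Anu := Anu) (lam := lam) (p := p) hAmu hlam (m + 1) i t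
    have ih := gmPow_fst_mono_exponent hAmu hlam hp hpq (m + 1) i t
    calc _ ≤ (lam * (gmPow n lam q Amu Anu (m + 1)).1 i t ^ p + (1 - lam) * Amu t j ^ p) ^ (1 / p) :=
          Real.rpow_mean2_mono_left hlam hX ih (hAmu t j) hp.le
      _ ≤ _ := Real.rpow_mean2_le_rpow_mean2 hlam (hX.trans ih) (hAmu t j) hp hpq

end gmPow

theorem gmPow_mu_mono_exponent_general (n : ℕ)
    (Amu Anu : Fin n → Fin n → ℝ) (hA : IsIFM n Amu Anu)
    (lam : ℝ) (hlam : lam ∈ Set.Icc (0 : ℝ) 1)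
    (p q : ℝ) (hp : 0 < p) (hpq : p ≤ q)
    (m : ℕ) (i j : Fin n) :
    (gmPow n lam p Amu Anu m).1 i j ≤ (gmPow n lam q Amu Anu m).1 i j :=
  gmPow_fst_mono_exponent (fun i j => (hA i j).1) hlam hp hpq m i j

/-- Theorem 3.6 (membership part): for `0 < p ≤ q`, the `m`-th power of `A`
with exponent `p` is dominated in membership by the one with exponent `q`. -/
theorem gmPow_mu_mono_exponent (n : ℕ) (hn : 1 ≤ n)
    (Amu Anu : Fin n → Fin n → ℝ) (hA : IsIFM n Amu Anu)
    (lam : ℝ) (hlam : lam ∈ Set.Icc (0 : ℝ) 1)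
    (p q : ℝ) (hp : 0 < p) (hpq : p ≤ q)
    (m : ℕ) (hm : 1 ≤ m) (i j : Fin n) :
    (gmPow n lam p Amu Anu m).1 i j ≤ (gmPow n lam q Amu Anu m).1 i j :=
  gmPow_mu_mono_exponent_general n Amu Anu hA lam hlam p q hp hpq m i j
end
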